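/- arXiv:1703.05094 — 3 statements merged into one kernel-verified Lean document; each statement's English description precedes it below -/
import Mathlib

section
/- Let ψ be a positive, increasing, twice continuously differentiable solution of (1/2)σ²ψ'' + μψ' - rψ = 0 on (a,b) with σ > 0, and let g be twice continuously differentiable on (z,b) for some z ∈ (a,b). Suppose (G_r g)(x) := (1/2)σ²(x)g''(x) + μ(x)g'(x) - r g(x) is non-increasing and non-positive on (z,b), and (L_ψ g)(z+) = g(z)ψ'(z)/S'(z) - g'(z)ψ(z)/S'(z) ≤ 0. Then g'(x)/ψ'(x) is non-increasing on (z,b), and hence f̂(x) = g(x) - ψ(x)g'(x)/ψ'(x) is non-decreasing on (z,b). -/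
open Set Filter Topology

/-! Put `D = (G_r g) ψ'/S' + r L_ψ g`. Then `(g'/ψ')' = m' (S'/ψ')² D` and
`(g - ψ g'/ψ')' = -ψ (g'/ψ')'`, so everything reduces to `D ≤ 0`. As `G_r ψ = 0`, we have
`(ψ'/S')' = r ψ m'` and `(L_ψ g)' = -ψ m' G_r g`. Hence for fixed `x` the function
`v ↦ (G_r g)(x) ψ'(v)/S'(v) + r (L_ψ g)(v)` has derivative `r ψ m' ((G_r g)(x) - (G_r g)(v))`,
which is `≤ 0` on `(z, x]` because `G_r g` is non-increasing. So its value `D(x)` at `x` is at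
most its limit `(G_r g)(x) ψ'(z)/S'(z) + r (L_ψ g)(z+)` at `z+`, which is `≤ 0`. -/

/-- The paper's `G_r f`, with the derivatives of `f` supplied as `f'` and `f''`. -/
noncomputable def generator (μ σ : ℝ → ℝ) (r : ℝ) (f f' f'' : ℝ → ℝ) (x : ℝ) : ℝ :=
  1 / 2 * σ x ^ 2 * f'' x + μ x * f' x - r * f x

noncomputable def speedDensity (σ S' : ℝ → ℝ) (x : ℝ) : ℝ :=
  2 / (σ x ^ 2 * S' x)

theorem speedDensity_pos {σ S' : ℝ → ℝ} {x : ℝ} (hσ : σ x ≠ 0) (hS : 0 < S' x) :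
    0 < speedDensity σ S' x := by
  unfold speedDensity
  positivity

/-- The paper's `L_ψ g`. -/
noncomputable def scaledWronskian (S' ψ ψ' g g' : ℝ → ℝ) (x : ℝ) : ℝ :=
  (g x * ψ' x - g' x * ψ x) / S' x

theorem antitoneOn_of_hasDerivAt_nonpos {D : Set ℝ} (hD : Convex ℝ D) {f f' : ℝ → ℝ}
    (hf : ∀ x ∈ D, HasDerivAt f (f' x) x) (hf'₀ : ∀ x ∈ interior D, f' x ≤ 0) :
    AntitoneOn f D :=
  antitoneOn_of_hasDerivWithinAt_nonpos hD
    (fun x hx => (hf x hx).continuousAt.continuousWithinAt)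
    (fun x hx => (hf x (interior_subset hx)).hasDerivWithinAt) hf'₀

theorem monotoneOn_of_hasDerivAt_nonneg {D : Set ℝ} (hD : Convex ℝ D) {f f' : ℝ → ℝ}
    (hf : ∀ x ∈ D, HasDerivAt f (f' x) x) (hf'₀ : ∀ x ∈ interior D, 0 ≤ f' x) :
    MonotoneOn f D :=
  monotoneOn_of_hasDerivWithinAt_nonneg hD
    (fun x hx => (hf x hx).continuousAt.continuousWithinAt)
    (fun x hx => (hf x (interior_subset hx)).hasDerivWithinAt) hf'₀

theorem AntitoneOn.le_of_tendsto_nhdsGT {α β : Type*} [LinearOrder α] [TopologicalSpace α]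
    [OrderTopology α] [DenselyOrdered α] [Preorder β] [TopologicalSpace β]
    [ClosedIciTopology β] {f : α → β} {z x : α} {l : β} (hzx : z < x)
    (hf : AntitoneOn f (Ioc z x)) (hlim : Tendsto f (𝓝[>] z) (𝓝 l)) : f x ≤ l := by
  have := nhdsGT_neBot_of_exists_gt ⟨x, hzx⟩
  refine ge_of_tendsto hlim ?_
  filter_upwards [Ioo_mem_nhdsGT hzx] with v hv
  exact hf ⟨hv.1, hv.2.le⟩ ⟨hzx, le_rfl⟩ hv.2.le

theorem hasDerivAt_sub_mul_div {ψ ψ' g g' : ℝ → ℝ} {x d : ℝ} (hψ : HasDerivAt ψ (ψ' x) x)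
    (hg : HasDerivAt g (g' x) x) (hψ'x : ψ' x ≠ 0) (hR : HasDerivAt (fun y => g' y / ψ' y) d x) :
    HasDerivAt (fun y => g y - ψ y * g' y / ψ' y) (-(ψ x * d)) x := by
  simp only [mul_div_assoc]
  exact (hg.sub (hψ.mul hR)).congr_deriv (by field_simp; ring)

theorem mul_add_mul_nonpos_of_antitoneOn {G Q L w : ℝ → ℝ} {z b r Qz Lz x : ℝ} (hr : 0 ≤ r)
    (hQ : ∀ v ∈ Ioo z b, HasDerivAt Q (r * w v) v)
    (hL : ∀ v ∈ Ioo z b, HasDerivAt L (-(w v * G v)) v) (hw : ∀ v ∈ Ioo z b, 0 ≤ w v)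
    (hG : AntitoneOn G (Ioo z b)) (hQlim : Tendsto Q (𝓝[>] z) (𝓝 Qz)) (hQz : 0 ≤ Qz)
    (hLlim : Tendsto L (𝓝[>] z) (𝓝 Lz)) (hLz : Lz ≤ 0) (hx : x ∈ Ioo z b) (hGx : G x ≤ 0) :
    G x * Q x + r * L x ≤ 0 := by
  have hsub : Ioc z x ⊆ Ioo z b := fun v hv => ⟨hv.1, hv.2.trans_lt hx.2⟩
  have hanti : AntitoneOn (fun v => G x * Q v + r * L v) (Ioc z x) := by
    refine antitoneOn_of_hasDerivAt_nonpos (convex_Ioc z x)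
      (fun v hv => ((hQ v (hsub hv)).const_mul (G x)).add ((hL v (hsub hv)).const_mul r)) ?_
    intro v hv
    rw [interior_Ioc] at hv
    have hv' : v ∈ Ioo z b := hsub (Ioo_subset_Ioc_self hv)
    have hGv : G x ≤ G v := hG hv' hx hv.2.le
    rw [show G x * (r * w v) + r * -(w v * G v) = r * w v * (G x - G v) by ring]
    exact mul_nonpos_of_nonneg_of_nonpos (mul_nonneg hr (hw v hv')) (by linarith)
  calc G x * Q x + r * L x ≤ G x * Qz + r * Lz :=
        hanti.le_of_tendsto_nhdsGT (x := x) hx.1 ((hQlim.const_mul (G x)).add (hLlim.const_mul r))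
    _ ≤ 0 :=
      add_nonpos (mul_nonpos_of_nonpos_of_nonneg hGx hQz) (mul_nonpos_of_nonneg_of_nonpos hr hLz)

section Diffusion

variable {μ σ S' : ℝ → ℝ} {x : ℝ}

/-- The factorization `G_0 = (d/dm)(d/dS)` of the generator. -/
theorem hasDerivAt_div_scaleDensity {f' f'' : ℝ → ℝ} (hσ : σ x ≠ 0) (hS : S' x ≠ 0)
    (hS' : HasDerivAt S' (-(2 * μ x / σ x ^ 2) * S' x) x) (hf' : HasDerivAt f' (f'' x) x) :
    HasDerivAt (fun y => f' y / S' y)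
      ((1 / 2 * σ x ^ 2 * f'' x + μ x * f' x) * speedDensity σ S' x) x :=
  (hf'.div hS' hS).congr_deriv (by unfold speedDensity; field_simp; ring)

theorem hasDerivAt_div_scaleDensity_of_generator_eq_zero {ψ ψ' ψ'' : ℝ → ℝ} {r : ℝ}
    (hσ : σ x ≠ 0) (hS : S' x ≠ 0) (hS' : HasDerivAt S' (-(2 * μ x / σ x ^ 2) * S' x) x)
    (hψ' : HasDerivAt ψ' (ψ'' x) x) (hψharm : generator μ σ r ψ ψ' ψ'' x = 0) :
    HasDerivAt (fun y => ψ' y / S' y) (r * (ψ x * speedDensity σ S' x)) x :=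
  (hasDerivAt_div_scaleDensity hσ hS hS' hψ').congr_deriv
    (by unfold generator at hψharm; linear_combination speedDensity σ S' x * hψharm)

theorem hasDerivAt_scaledWronskian {ψ ψ' ψ'' g g' g'' : ℝ → ℝ} {r : ℝ} (hσ : σ x ≠ 0)
    (hS : S' x ≠ 0) (hS' : HasDerivAt S' (-(2 * μ x / σ x ^ 2) * S' x) x)
    (hψ : HasDerivAt ψ (ψ' x) x) (hψ' : HasDerivAt ψ' (ψ'' x) x)
    (hψharm : generator μ σ r ψ ψ' ψ'' x = 0)
    (hg : HasDerivAt g (g' x) x) (hg' : HasDerivAt g' (g'' x) x) :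
    HasDerivAt (scaledWronskian S' ψ ψ' g g')
      (-(ψ x * speedDensity σ S' x * generator μ σ r g g' g'' x)) x := by
  have hsplit : scaledWronskian S' ψ ψ' g g' =
      fun y => g y * (ψ' y / S' y) - ψ y * (g' y / S' y) := by
    funext y
    unfold scaledWronskian
    ring
  rw [hsplit]
  refine ((hg.mul (hasDerivAt_div_scaleDensity hσ hS hS' hψ')).sub
    (hψ.mul (hasDerivAt_div_scaleDensity hσ hS hS' hg'))).congr_deriv ?_
  unfold generator at hψharm ⊢
  linear_combination g x * speedDensity σ S' x * hψharm

theorem hasDerivAt_div_of_generator_eq_zero {ψ ψ' ψ'' g g' g'' : ℝ → ℝ} {r : ℝ}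
    (hσ : σ x ≠ 0) (hS : S' x ≠ 0) (hψ'x : ψ' x ≠ 0)
    (hψ' : HasDerivAt ψ' (ψ'' x) x) (hg' : HasDerivAt g' (g'' x) x)
    (hψharm : generator μ σ r ψ ψ' ψ'' x = 0) :
    HasDerivAt (fun y => g' y / ψ' y)
      (speedDensity σ S' x * (S' x / ψ' x) ^ 2 *
        (generator μ σ r g g' g'' x * (ψ' x / S' x) + r * scaledWronskian S' ψ ψ' g g' x)) x := by
  refine (hg'.div hψ' hψ'x).congr_deriv ?_
  have hψ'' : ψ'' x = 2 / σ x ^ 2 * (r * ψ x - μ x * ψ' x) := by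
    unfold generator at hψharm
    field_simp
    linarith
  rw [hψ'']
  unfold generator scaledWronskian speedDensity
  field_simp
  ring

end Diffusion

theorem repFun_monotone_of_generator_general
    (a b z r Lz : ℝ) (μ σ S' ψ ψ' ψ'' g g' g'' : ℝ → ℝ)
    (hr : 0 < r) (hz : z ∈ Ioo a b)
    (hσpos : ∀ x ∈ Ioo a b, 0 < σ x)
    (hS'pos : ∀ x ∈ Ioo a b, 0 < S' x)
    (hS' : ∀ x ∈ Ioo a b, HasDerivAt S' (-(2 * μ x / σ x ^ 2) * S' x) x)
    (hψpos : ∀ x ∈ Ioo a b, 0 < ψ x)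
    (hψ : ∀ x ∈ Ioo a b, HasDerivAt ψ (ψ' x) x)
    (hψ'pos : ∀ x ∈ Ioo a b, 0 < ψ' x)
    (hψ' : ∀ x ∈ Ioo a b, HasDerivAt ψ' (ψ'' x) x)
    (hψharm : ∀ x ∈ Ioo a b,
      (1 / 2) * σ x ^ 2 * ψ'' x + μ x * ψ' x - r * ψ x = 0)
    (hg : ∀ x ∈ Ioo z b, HasDerivAt g (g' x) x)
    (hg' : ∀ x ∈ Ioo z b, HasDerivAt g' (g'' x) x)
    (hGanti : AntitoneOn
      (fun x => (1 / 2) * σ x ^ 2 * g'' x + μ x * g' x - r * g x) (Ioo z b))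
    (hGnonpos : ∀ x ∈ Ioo z b,
      (1 / 2) * σ x ^ 2 * g'' x + μ x * g' x - r * g x ≤ 0)
    (hLlim : Tendsto (fun x => (g x * ψ' x - g' x * ψ x) / S' x)
      (nhdsWithin z (Ioi z)) (nhds Lz))
    (hLz : Lz ≤ 0) :
    AntitoneOn (fun x => g' x / ψ' x) (Ioo z b) ∧
      MonotoneOn (fun x => g x - ψ x * g' x / ψ' x) (Ioo z b) := by
  have hsub : Ioo z b ⊆ Ioo a b := fun x hx => ⟨hz.1.trans hx.1, hx.2⟩
  have hσ x (hx : x ∈ Ioo a b) := (hσpos x hx).ne'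
  have hS x (hx : x ∈ Ioo a b) := (hS'pos x hx).ne'
  have hQ x (hx : x ∈ Ioo a b) := hasDerivAt_div_scaleDensity_of_generator_eq_zero
    (hσ x hx) (hS x hx) (hS' x hx) (hψ' x hx) (hψharm x hx)
  have hL x (hx : x ∈ Ioo z b) := hasDerivAt_scaledWronskian (g := g) (hσ x (hsub hx))
    (hS x (hsub hx)) (hS' x (hsub hx)) (hψ x (hsub hx)) (hψ' x (hsub hx)) (hψharm x (hsub hx))
    (hg x hx) (hg' x hx)
  have hD : ∀ x ∈ Ioo z b, generator μ σ r g g' g'' x * (ψ' x / S' x) +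
      r * scaledWronskian S' ψ ψ' g g' x ≤ 0 := fun x hx =>
    mul_add_mul_nonpos_of_antitoneOn hr.le (fun v hv => hQ v (hsub hv)) hL
      (fun v hv => mul_nonneg (hψpos v (hsub hv)).le
        (speedDensity_pos (hσ v (hsub hv)) (hS'pos v (hsub hv))).le)
      hGanti (hQ z hz).continuousAt.continuousWithinAt.tendsto
      (div_pos (hψ'pos z hz) (hS'pos z hz)).le hLlim hLz hx (hGnonpos x hx)
  have hR x (hx : x ∈ Ioo z b) := hasDerivAt_div_of_generator_eq_zero (g := g) (hσ x (hsub hx))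
    (hS x (hsub hx)) (hψ'pos x (hsub hx)).ne' (hψ' x (hsub hx)) (hg' x hx) (hψharm x (hsub hx))
  have hR_nonpos x (hx : x ∈ Ioo z b) := mul_nonpos_of_nonneg_of_nonpos
    (mul_nonneg (speedDensity_pos (hσ x (hsub hx)) (hS'pos x (hsub hx))).le
      (sq_nonneg (S' x / ψ' x))) (hD x hx)
  refine ⟨antitoneOn_of_hasDerivAt_nonpos (convex_Ioo z b) hR fun x hx => ?_,
    monotoneOn_of_hasDerivAt_nonneg (convex_Ioo z b) (fun x hx => hasDerivAt_sub_mul_div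
      (hψ x (hsub hx)) (hg x hx) (hψ'pos x (hsub hx)).ne' (hR x hx)) fun x hx => ?_⟩ <;>
    rw [interior_Ioo] at hx
  · exact hR_nonpos x hx
  · exact neg_nonneg.2
      (mul_nonpos_of_nonneg_of_nonpos (hψpos x (hsub hx)).le (hR_nonpos x hx))

/-- Lemma 5(B): if `G_r g` is non-increasing and non-positive on
`(z,b)` and `(L_ψ g)(z+) ≤ 0`, then `g'/ψ'` is non-increasing and
`f̂ = g - ψ g'/ψ'` is non-decreasing on `(z,b)`. -/
theorem repFun_monotone_of_generator
    (a b z r Lz : ℝ) (μ σ S' ψ ψ' ψ'' g g' g'' : ℝ → ℝ)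
    (hr : 0 < r) (hz : z ∈ Ioo a b)
    (hσpos : ∀ x ∈ Ioo a b, 0 < σ x)
    (hμc : ContinuousOn μ (Ioo a b)) (hσc : ContinuousOn σ (Ioo a b))
    (hS'pos : ∀ x ∈ Ioo a b, 0 < S' x)
    (hS' : ∀ x ∈ Ioo a b, HasDerivAt S' (-(2 * μ x / σ x ^ 2) * S' x) x)
    (hψpos : ∀ x ∈ Ioo a b, 0 < ψ x)
    (hψ : ∀ x ∈ Ioo a b, HasDerivAt ψ (ψ' x) x)
    (hψ'pos : ∀ x ∈ Ioo a b, 0 < ψ' x)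
    (hψ' : ∀ x ∈ Ioo a b, HasDerivAt ψ' (ψ'' x) x)
    (hψ''c : ContinuousOn ψ'' (Ioo a b))
    (hψharm : ∀ x ∈ Ioo a b,
      (1 / 2) * σ x ^ 2 * ψ'' x + μ x * ψ' x - r * ψ x = 0)
    (hg : ∀ x ∈ Ioo z b, HasDerivAt g (g' x) x)
    (hg' : ∀ x ∈ Ioo z b, HasDerivAt g' (g'' x) x)
    (hg''c : ContinuousOn g'' (Ioo z b))
    (hGanti : AntitoneOn
      (fun x => (1 / 2) * σ x ^ 2 * g'' x + μ x * g' x - r * g x) (Ioo z b))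
    (hGnonpos : ∀ x ∈ Ioo z b,
      (1 / 2) * σ x ^ 2 * g'' x + μ x * g' x - r * g x ≤ 0)
    (hLlim : Tendsto (fun x => (g x * ψ' x - g' x * ψ x) / S' x)
      (nhdsWithin z (Ioi z)) (nhds Lz))
    (hLz : Lz ≤ 0) :
    AntitoneOn (fun x => g' x / ψ' x) (Ioo z b) ∧
      MonotoneOn (fun x => g x - ψ x * g' x / ψ' x) (Ioo z b) :=
  repFun_monotone_of_generator_general a b z r Lz μ σ S' ψ ψ' ψ'' g g' g'' hr hz hσpos hS'pos hS'
    hψpos hψ hψ'pos hψ' hψharm hg hg' hGanti hGnonpos hLlim hLz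
end

section
/- Let ψ be a positive, increasing, twice continuously differentiable r-harmonic function on (a,b) (i.e. (1/2)σ²ψ'' + μψ' = rψ) and g twice continuously differentiable. Then wherever g and ψ are twice differentiable, d/dx(g'(x)/ψ'(x)) = (2S'(x)/(σ²(x)ψ'(x)²)) · [ (G_r g)(x)·ψ'(x)/S'(x) + r·(L_ψ g)(x) ], where (G_r g) = (1/2)σ²g'' + μg' - rg, (L_ψ g)(x) = (g(x)ψ'(x) - g'(x)ψ(x))/S'(x), and S' is the scale density. -/
open Set

theorem deriv_ratio_identity_general
    (a b r : ℝ) (μ σ S' ψ ψ' ψ'' g g' g'' : ℝ → ℝ)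
    (hσpos : ∀ x ∈ Ioo a b, 0 < σ x)
    (hS'pos : ∀ x ∈ Ioo a b, 0 < S' x)
    (hψ'pos : ∀ x ∈ Ioo a b, 0 < ψ' x)
    (hψ' : ∀ x ∈ Ioo a b, HasDerivAt ψ' (ψ'' x) x)
    (hψharm : ∀ x ∈ Ioo a b,
      (1 / 2) * σ x ^ 2 * ψ'' x + μ x * ψ' x = r * ψ x)
    (hg' : ∀ x ∈ Ioo a b, HasDerivAt g' (g'' x) x) :
    ∀ x ∈ Ioo a b,
      HasDerivAt (fun y => g' y / ψ' y)
        (2 * S' x / (σ x ^ 2 * ψ' x ^ 2) *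
          (((1 / 2) * σ x ^ 2 * g'' x + μ x * g' x - r * g x) * ψ' x / S' x +
            r * ((g x * ψ' x - g' x * ψ x) / S' x))) x := by
  intro x hx
  have hψ'ne := (hψ'pos x hx).ne'
  have hσne := (hσpos x hx).ne'
  have hS'ne := (hS'pos x hx).ne'
  refine ((hg' x hx).div (hψ' x hx) hψ'ne).congr_deriv ?_
  field_simp
  -- After the quotient rule the two sides differ by a multiple of the r-harmonic equation for ψ.
  linear_combination (-2 * g' x) * hψharm x hx

/-- the key differentiation identity
`d/dx (g'/ψ') = (2S'/(σ²ψ'²)) [ (G_r g) ψ'/S' + r (L_ψ g) ]`. -/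
theorem deriv_ratio_identity
    (a b r : ℝ) (μ σ S' ψ ψ' ψ'' g g' g'' : ℝ → ℝ)
    (hr : 0 < r)
    (hσpos : ∀ x ∈ Ioo a b, 0 < σ x)
    (hμc : ContinuousOn μ (Ioo a b)) (hσc : ContinuousOn σ (Ioo a b))
    (hS'pos : ∀ x ∈ Ioo a b, 0 < S' x)
    (hS' : ∀ x ∈ Ioo a b, HasDerivAt S' (-(2 * μ x / σ x ^ 2) * S' x) x)
    (hψpos : ∀ x ∈ Ioo a b, 0 < ψ x)
    (hψ : ∀ x ∈ Ioo a b, HasDerivAt ψ (ψ' x) x)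
    (hψ'pos : ∀ x ∈ Ioo a b, 0 < ψ' x)
    (hψ' : ∀ x ∈ Ioo a b, HasDerivAt ψ' (ψ'' x) x)
    (hψharm : ∀ x ∈ Ioo a b,
      (1 / 2) * σ x ^ 2 * ψ'' x + μ x * ψ' x = r * ψ x)
    (hg : ∀ x ∈ Ioo a b, HasDerivAt g (g' x) x)
    (hg' : ∀ x ∈ Ioo a b, HasDerivAt g' (g'' x) x) :
    ∀ x ∈ Ioo a b,
      HasDerivAt (fun y => g' y / ψ' y)
        (2 * S' x / (σ x ^ 2 * ψ' x ^ 2) *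
          (((1 / 2) * σ x ^ 2 * g'' x + μ x * g' x - r * g x) * ψ' x / S' x +
            r * ((g x * ψ' x - g' x * ψ x) / S' x))) x :=
  deriv_ratio_identity_general a b r μ σ S' ψ ψ' ψ'' g g' g'' hσpos hS'pos hψ'pos hψ' hψharm hg'
end

section
/- Let ψ be positive, increasing, twice continuously differentiable and r-harmonic on (a,b) with speed density m' and scale density S', and assume ψ'(x)/S'(x) → ∞ as x → b. Let π be continuous with π bounded below by ε > 0 near b and ∫_a^{x₀}ψπm' finite and negative for some x₀. Then the function F(x) = ∫_a^x ψ(t)π(t)m'(t)dt tends to +∞ as x → b, and hence (since F is continuous, negative at some point, and strictly increasing where π > 0) the equation F(x) = 0 has a root y* in (x₀, b). -/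
/-!
Harmonicity of `ψ` says `(ψ'/S')' = r ψ m'`, so near `b`, where `π ≥ ε`, the integrand of `F`
dominates the derivative of `(ε/r) ψ'/S'`. Hence `F - (ε/r) ψ'/S'` is increasing there, and `F`
inherits the divergence of `ψ'/S'` at the unattainable boundary `b`. The root then comes from the
intermediate value theorem between `x₀`, where `F < 0`, and a point close to `b`, where `F > 0`.
-/

open Set Filter Topology

lemma tendsto_atTop_nhdsLT_of_hasDerivAt_le {c b : ℝ} {f g f' g' : ℝ → ℝ} (hcb : c < b)
    (hf : ∀ x ∈ Ico c b, HasDerivAt f (f' x) x) (hg : ∀ x ∈ Ico c b, HasDerivAt g (g' x) x)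
    (hle : ∀ x ∈ Ioo c b, g' x ≤ f' x) (hg_top : Tendsto g (𝓝[<] b) atTop) :
    Tendsto f (𝓝[<] b) atTop := by
  have hfg : ∀ x ∈ Ico c b, HasDerivAt (f - g) ((f' - g') x) x :=
    fun x hx => (hf x hx).sub (hg x hx)
  have hmono : MonotoneOn (f - g) (Ico c b) := by
    refine monotoneOn_of_hasDerivWithinAt_nonneg (f' := f' - g') (convex_Ico c b)
      (fun x hx => (hfg x hx).continuousAt.continuousWithinAt) ?_ ?_ <;> rw [interior_Ico]
    · exact fun x hx => (hfg x (Ioo_subset_Ico_self hx)).hasDerivWithinAt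
    · exact fun x hx => sub_nonneg.mpr (hle x hx)
  have hlower : ∀ᶠ x in 𝓝[<] b, (f c - g c) + g x ≤ f x := by
    filter_upwards [Ioo_mem_nhdsLT hcb] with x hx
    have := hmono (left_mem_Ico.mpr hcb) (Ioo_subset_Ico_self hx) hx.1.le
    simp only [Pi.sub_apply] at this
    linarith
  exact tendsto_atTop_mono' _ hlower (tendsto_atTop_add_const_left _ _ hg_top)

lemma exists_mem_Ioo_eq_of_tendsto_atTop {x₀ b v : ℝ} {f : ℝ → ℝ} (hx₀b : x₀ < b)
    (hf : ContinuousOn f (Ico x₀ b)) (hfx₀ : f x₀ < v) (hf_top : Tendsto f (𝓝[<] b) atTop) :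
    ∃ y ∈ Ioo x₀ b, f y = v := by
  obtain ⟨x₂, hx₂, hfx₂⟩ :=
    (Eventually.and (Ioo_mem_nhdsLT hx₀b) (hf_top.eventually_gt_atTop v)).exists
  obtain ⟨y, hy, hfy⟩ := intermediate_value_Ioo hx₂.1.le
    (hf.mono (Icc_subset_Ico_right hx₂.2)) ⟨hfx₀, hfx₂⟩
  exact ⟨y, ⟨hy.1, hy.2.trans hx₂.2⟩, hfy⟩

theorem optimal_entry_root_exists_general
    (a b r x₀ c ε : ℝ) (σ S' m' ψ ψ' π F : ℝ → ℝ)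
    (hr : 0 < r) (hx₀ : x₀ ∈ Ioo a b) (hc : c ∈ Ioo a b) (hε : 0 < ε)
    (hσpos : ∀ x ∈ Ioo a b, 0 < σ x)
    (hS'pos : ∀ x ∈ Ioo a b, 0 < S' x)
    (hm' : ∀ x ∈ Ioo a b, m' x = 2 / (σ x ^ 2 * S' x))
    (hψpos : ∀ x ∈ Ioo a b, 0 < ψ x)
    (hharm : ∀ x ∈ Ioo a b,
      HasDerivAt (fun y => ψ' y / S' y) (r * ψ x * m' x) x)
    (hunatt : Tendsto (fun x => ψ' x / S' x) (nhdsWithin b (Iio b)) atTop)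
    (hπε : ∀ x ∈ Ioo c b, ε ≤ π x)
    -- `F(x) = ∫_a^x ψ(t) π(t) m'(t) dt`, finite and negative at `x₀`:
    (hF : ∀ x ∈ Ioo a b, HasDerivAt F (ψ x * π x * m' x) x)
    (hFx₀ : F x₀ < 0) :
    Tendsto F (nhdsWithin b (Iio b)) atTop ∧
    ∃ ystar ∈ Ioo x₀ b, F ystar = 0 := by
  have hsub : ∀ {d}, d ∈ Ioo a b → Ico d b ⊆ Ioo a b := fun hd x hx => ⟨hd.1.trans_le hx.1, hx.2⟩
  have hψm' : ∀ x ∈ Ioo a b, 0 ≤ ψ x * m' x := fun x hx => by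
    rw [hm' x hx]
    have hσS' : 0 < σ x ^ 2 * S' x := mul_pos (pow_pos (hσpos x hx) 2) (hS'pos x hx)
    exact (mul_pos (hψpos x hx) (div_pos two_pos hσS')).le
  have hdom : ∀ x ∈ Ioo c b, ε / r * (r * ψ x * m' x) ≤ ψ x * π x * m' x := fun x hx => by
    have hx' : x ∈ Ioo a b := hsub hc (Ioo_subset_Ico_self hx)
    calc ε / r * (r * ψ x * m' x) = ε * (ψ x * m' x) := by field_simp
      _ ≤ π x * (ψ x * m' x) := mul_le_mul_of_nonneg_right (hπε x hx) (hψm' x hx')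
      _ = ψ x * π x * m' x := by ring
  have hF_top : Tendsto F (𝓝[<] b) atTop :=
    tendsto_atTop_nhdsLT_of_hasDerivAt_le hc.2 (fun x hx => hF x (hsub hc hx))
      (fun x hx => (hharm x (hsub hc hx)).const_mul (ε / r)) hdom
      (hunatt.const_mul_atTop (div_pos hε hr))
  exact ⟨hF_top, exists_mem_Ioo_eq_of_tendsto_atTop hx₀.2
    (fun x hx => (hF x (hsub hx₀ hx)).continuousAt.continuousWithinAt) hFx₀ hF_top⟩

/-- optimal entry, existence of the root: if `ψ'/S' → ∞` at `b`
and `π ≥ ε > 0` near `b`, then `F(x) = ∫_a^x ψ π m'` tends to `+∞` at `b` and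
the equation `F(x) = 0` has a root `y* ∈ (x₀,b)`. -/
theorem optimal_entry_root_exists
    (a b r x₀ c ε : ℝ) (μ σ S' m' ψ ψ' ψ'' π F : ℝ → ℝ)
    (hr : 0 < r) (hx₀ : x₀ ∈ Ioo a b) (hc : c ∈ Ioo a b) (hε : 0 < ε)
    (hσpos : ∀ x ∈ Ioo a b, 0 < σ x)
    (hS'pos : ∀ x ∈ Ioo a b, 0 < S' x)
    (hS' : ∀ x ∈ Ioo a b, HasDerivAt S' (-(2 * μ x / σ x ^ 2) * S' x) x)
    (hm' : ∀ x ∈ Ioo a b, m' x = 2 / (σ x ^ 2 * S' x))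
    (hψpos : ∀ x ∈ Ioo a b, 0 < ψ x)
    (hψ : ∀ x ∈ Ioo a b, HasDerivAt ψ (ψ' x) x)
    (hψ'pos : ∀ x ∈ Ioo a b, 0 < ψ' x)
    (hψ' : ∀ x ∈ Ioo a b, HasDerivAt ψ' (ψ'' x) x)
    (hψ''c : ContinuousOn ψ'' (Ioo a b))
    (hharm : ∀ x ∈ Ioo a b,
      HasDerivAt (fun y => ψ' y / S' y) (r * ψ x * m' x) x)
    (hunatt : Tendsto (fun x => ψ' x / S' x) (nhdsWithin b (Iio b)) atTop)
    (hπc : ContinuousOn π (Ioo a b))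
    (hπneg : ∀ x ∈ Ioo a x₀, π x < 0)
    (hπpos : ∀ x ∈ Ioo x₀ b, 0 < π x)
    (hπε : ∀ x ∈ Ioo c b, ε ≤ π x)
    -- `F(x) = ∫_a^x ψ(t) π(t) m'(t) dt`, finite and negative at `x₀`:
    (hF : ∀ x ∈ Ioo a b, HasDerivAt F (ψ x * π x * m' x) x)
    (hFx₀ : F x₀ < 0) :
    Tendsto F (nhdsWithin b (Iio b)) atTop ∧
    ∃ ystar ∈ Ioo x₀ b, F ystar = 0 :=
  optimal_entry_root_exists_general a b r x₀ c ε σ S' m' ψ ψ' π F hr hx₀ hc hε hσpos hS'pos hm'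
    hψpos hharm hunatt hπε hF hFx₀
end
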